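/- Let M be a Maya diagram with k-modular decomposition (M⁽⁰⁾,...,M⁽ᵏ⁻¹⁾), and let gᵢ be the genus of M⁽ⁱ⁾. Then M is (p, k)-cyclic where p = Σ_{i=0}^{k-1} (2gᵢ + 1); that is, there exist p integers μ₀,...,μ_{p-1} such that applying the flips φ_{μ₀},...,φ_{μ_{p-1}} to M yields M + k. -/

import Mathlib

open Classical in
/-- The flip at site `m`: toggle membership of `m` in `M`. -/
noncomputable def mayaFlip (m : ℤ) (M : Set ℤ) : Set ℤ :=
  if m ∈ M then M \ {m} else M ∪ {m}

/-- Composition of flips along a list of sites. -/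
noncomputable def flipList (l : List ℤ) (M : Set ℤ) : Set ℤ :=
  l.foldr mayaFlip M

/-- A Maya diagram. -/
def IsMayaDiagram (M : Set ℤ) : Prop :=
  (M ∩ Set.Ici 0).Finite ∧ (Set.Iio 0 \ M).Finite

/-- `Ξ(β) = (-∞,β₀) ∪ [β₁,β₂) ∪ ... ∪ [β_{2g-1},β_{2g})`. -/
def XiBlocks (g : ℕ) (β : Fin (2 * g + 1) → ℤ) : Set ℤ :=
  Set.Iio (β ⟨0, by omega⟩) ∪
    ⋃ i : Fin g, Set.Ico (β ⟨2 * (i : ℕ) + 1, by have := i.isLt; omega⟩)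
      (β ⟨2 * (i : ℕ) + 2, by have := i.isLt; omega⟩)

/-- `M + k = {m + k : m ∈ M}`. -/
def shiftSet (M : Set ℤ) (k : ℤ) : Set ℤ := (· + k) '' M

/-- `M` is `(p,k)`-cyclic: some composition of `p` flips maps `M` to `M + k`. -/
def MayaCyclic (M : Set ℤ) (p : ℕ) (k : ℤ) : Prop :=
  ∃ μ : List ℤ, μ.length = p ∧ flipList μ M = shiftSet M k

/-- The `i`-th component of the `k`-modular decomposition: `M⁽ⁱ⁾ = {m : km + i ∈ M}`. -/
def modComp (k : ℕ) (M : Set ℤ) (i : Fin k) : Set ℤ :=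
  {m : ℤ | (k : ℤ) * m + (i : ℤ) ∈ M}

/-!
Write `x = k q + i` with `i : Fin k`. Then `x ∈ M` iff `q ∈ Ξ(βᵢ)` and `x - k ∈ M` iff
`q - 1 ∈ Ξ(βᵢ)`. Membership of `q` in `Ξ(β)` is the parity of `#{t | β t ≤ q}`, so it changes
between `q - 1` and `q` exactly when `q` is an endpoint `β t`. Hence flipping `M` once at each of
the `Σᵢ (2gᵢ + 1)` sites `k βᵢ(t) + i` produces `M + k`.
-/

theorem mem_mayaFlip {m x : ℤ} {M : Set ℤ} : x ∈ mayaFlip m M ↔ Xor (x ∈ M) (x = m) := by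
  by_cases h : m ∈ M <;> by_cases hx : x = m <;> simp [mayaFlip, h, hx, Xor]

theorem mem_flipList_of_nodup {l : List ℤ} (hl : l.Nodup) {M : Set ℤ} {x : ℤ} :
    x ∈ flipList l M ↔ Xor (x ∈ M) (x ∈ l) := by
  induction l with
  | nil => simp [flipList, Xor]
  | cons a l ih =>
    obtain ⟨ha, hl⟩ := List.nodup_cons.mp hl
    change x ∈ mayaFlip a (flipList l M) ↔ _
    rw [mem_mayaFlip, ih hl, List.mem_cons]
    by_cases hx : x = a
    · subst hx; simp [ha, Xor]
    · simp [hx, Xor]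

theorem mem_shiftSet {M : Set ℤ} {k x : ℤ} : x ∈ shiftSet M k ↔ x - k ∈ M :=
  ⟨by rintro ⟨y, hy, rfl⟩; simpa using hy, fun h => ⟨x - k, h, sub_add_cancel x k⟩⟩

section ModularDecomposition

variable {k : ℕ}

theorem eq_and_eq_of_mul_add_eq {a b : ℤ} {i j : Fin k} (h : (k : ℤ) * a + i = k * b + j) :
    a = b ∧ i = j := by
  have hk : (0 : ℤ) < k := by have := i.pos; omega
  have hdiv (c : ℤ) (l : Fin k) : ((k : ℤ) * c + l) / k = c ∧ ((k : ℤ) * c + l) % k = l :=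
    (Int.ediv_emod_unique hk).mpr ⟨add_comm _ _, by omega, by omega⟩
  obtain ⟨ha, hi⟩ := hdiv a i
  obtain ⟨hb, hj⟩ := hdiv b j
  rw [h] at ha hi
  exact ⟨ha.symm.trans hb, Fin.ext (by omega)⟩

theorem exists_eq_mul_add_fin (hk : 0 < k) (x : ℤ) : ∃ (q : ℤ) (i : Fin k), x = k * q + i := by
  have hk' : (0 : ℤ) < k := by omega
  have h0 := Int.emod_nonneg x hk'.ne'
  have h1 := Int.emod_lt_of_pos x hk'
  refine ⟨x / k, ⟨(x % k).toNat, by omega⟩, ?_⟩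
  simp only [Int.toNat_of_nonneg h0]
  exact (Int.mul_ediv_add_emod x k).symm

end ModularDecomposition

theorem Fin.mem_iff_val_lt_card_of_isLowerSet {N : ℕ} {s : Finset (Fin N)}
    (hs : IsLowerSet (s : Set (Fin N))) (t : Fin N) : t ∈ s ↔ (t : ℕ) < s.card := by
  constructor
  · intro ht
    have := Finset.card_le_card fun u hu => hs (Finset.mem_Iic.mp hu) ht
    rw [Fin.card_Iic] at this
    omega
  · intro ht
    by_contra hts
    have := Finset.card_le_card fun u hu => Finset.mem_Iio.mpr <|
      lt_of_not_ge fun hut => hts (hs hut hu)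
    rw [Fin.card_Iio] at this
    omega

theorem Monotone.le_iff_lt_card_filter {α : Type*} [Preorder α] [DecidableLE α] {N : ℕ}
    {f : Fin N → α} (hf : Monotone f) (a : α) (t : Fin N) :
    f t ≤ a ↔ (t : ℕ) < (Finset.univ.filter (f · ≤ a)).card := by
  rw [← Fin.mem_iff_val_lt_card_of_isLowerSet, Finset.mem_filter_univ]
  intro t t' ht't ht
  simp only [Finset.coe_filter, Finset.mem_univ, true_and, Set.mem_ofPred_eq] at ht ⊢
  exact (hf ht't).trans ht

section XiBlocks

variable {g : ℕ} {β : Fin (2 * g + 1) → ℤ}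

theorem mem_XiBlocks_iff_even_card (hβ : StrictMono β) (q : ℤ) :
    q ∈ XiBlocks g β ↔ Even (Finset.univ.filter (β · ≤ q)).card := by
  have hle := hβ.monotone.le_iff_lt_card_filter q
  have hn := Finset.card_le_univ (Finset.univ.filter (β · ≤ q))
  rw [Fintype.card_fin] at hn
  generalize (Finset.univ.filter (β · ≤ q)).card = n at hle hn ⊢
  simp only [XiBlocks, Set.mem_union, Set.mem_Iio, Set.mem_iUnion, Set.mem_Ico, ← not_le]
  simp only [hle]
  constructor
  · rintro (_ | ⟨j, _, _⟩)
    · exact ⟨0, by omega⟩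
    · exact ⟨j + 1, by omega⟩
  · rintro ⟨_ | r, hr⟩
    · left; omega
    · right
      refine ⟨⟨r, by omega⟩, ?_, ?_⟩ <;> dsimp only <;> omega

theorem sub_one_mem_XiBlocks_iff (hβ : StrictMono β) (q : ℤ) :
    q - 1 ∈ XiBlocks g β ↔ Xor (q ∈ XiBlocks g β) (q ∈ Set.range β) := by
  rw [mem_XiBlocks_iff_even_card hβ, mem_XiBlocks_iff_even_card hβ]
  by_cases hq : q ∈ Set.range β
  · obtain ⟨t₀, rfl⟩ := hq
    have : Finset.univ.filter (β · ≤ β t₀) = insert t₀ (Finset.univ.filter (β · ≤ β t₀ - 1)) := by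
      ext t
      simp only [Finset.mem_insert, Finset.mem_filter_univ, Int.le_sub_one_iff]
      rw [le_iff_eq_or_lt, hβ.injective.eq_iff]
    rw [this, Finset.card_insert_of_notMem (by simp), Nat.even_add_one]
    simp [Xor]
  · have : Finset.univ.filter (β · ≤ q) = Finset.univ.filter (β · ≤ q - 1) := by
      ext t
      have : β t ≠ q := fun h => hq ⟨t, h⟩
      simp only [Finset.mem_filter_univ]
      omega
    simp [this, hq, Xor]

end XiBlocks

section FlipSites

variable {k : ℕ} {g : Fin k → ℕ} (β : ∀ i : Fin k, Fin (2 * g i + 1) → ℤ)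

def modularFlipSites : List ℤ :=
  (List.finRange k).flatMap fun i => (List.finRange (2 * g i + 1)).map fun t => k * β i t + i

theorem length_modularFlipSites :
    (modularFlipSites β).length = ∑ i : Fin k, (2 * g i + 1) := by
  simp [modularFlipSites, List.length_flatMap, Fin.sum_univ_def]

theorem mul_add_mem_modularFlipSites_iff {q : ℤ} {i : Fin k} :
    (k : ℤ) * q + i ∈ modularFlipSites β ↔ q ∈ Set.range (β i) := by
  simp only [modularFlipSites, List.mem_flatMap, List.mem_map, List.mem_finRange, true_and,
    Set.mem_range]
  constructor
  · rintro ⟨j, t, h⟩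
    obtain ⟨rfl, rfl⟩ := eq_and_eq_of_mul_add_eq h
    exact ⟨t, rfl⟩
  · rintro ⟨t, rfl⟩
    exact ⟨i, t, rfl⟩

theorem nodup_modularFlipSites (hβ : ∀ i, StrictMono (β i)) : (modularFlipSites β).Nodup := by
  refine List.nodup_flatMap.mpr ⟨fun i _ => (List.nodup_finRange _).map fun t t' h =>
    (hβ i).injective (eq_and_eq_of_mul_add_eq h).1, (List.nodup_finRange k).imp ?_⟩
  intro i j hij x hi hj
  obtain ⟨t, -, rfl⟩ := List.mem_map.mp hi
  obtain ⟨t', -, h⟩ := List.mem_map.mp hj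
  exact hij (eq_and_eq_of_mul_add_eq h).2.symm

end FlipSites

theorem maya_cyclic_of_modular_genera_general (k : ℕ) (hk : 1 ≤ k) (M : Set ℤ)
    (g : Fin k → ℕ)
    (β : ∀ i : Fin k, Fin (2 * g i + 1) → ℤ)
    (hβ : ∀ i : Fin k, StrictMono (β i))
    (hXi : ∀ i : Fin k, modComp k M i = XiBlocks (g i) (β i)) :
    MayaCyclic M (∑ i : Fin k, (2 * g i + 1)) (k : ℤ) := by
  refine ⟨modularFlipSites β, length_modularFlipSites β, Set.ext fun x => ?_⟩
  obtain ⟨q, i, rfl⟩ := exists_eq_mul_add_fin hk x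
  have hmem (r : ℤ) : (k : ℤ) * r + i ∈ M ↔ r ∈ XiBlocks (g i) (β i) := by
    rw [← hXi]
    rfl
  rw [mem_flipList_of_nodup (nodup_modularFlipSites β hβ), mem_shiftSet,
    show (k : ℤ) * q + i - k = k * (q - 1) + i by ring, hmem, hmem,
    mul_add_mem_modularFlipSites_iff, sub_one_mem_XiBlocks_iff (hβ i)]

/-- If the `k`-modular components of a Maya diagram `M` have genera `g₀,...,g_{k-1}`,
then `M` is `(p,k)`-cyclic with `p = Σᵢ (2gᵢ + 1)`. -/
theorem maya_cyclic_of_modular_genera (k : ℕ) (hk : 1 ≤ k) (M : Set ℤ)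
    (hM : IsMayaDiagram M) (g : Fin k → ℕ)
    (β : ∀ i : Fin k, Fin (2 * g i + 1) → ℤ)
    (hβ : ∀ i : Fin k, StrictMono (β i))
    (hXi : ∀ i : Fin k, modComp k M i = XiBlocks (g i) (β i)) :
    MayaCyclic M (∑ i : Fin k, (2 * g i + 1)) (k : ℤ) :=
  maya_cyclic_of_modular_genera_general k hk M g β hβ hXi
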